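/- arXiv:2204.03291 — 2 statements merged into one kernel-verified Lean document; each statement's English description precedes it below -/
import Mathlib

section
/- Let D = P⁻¹Q be an SBP operator (P symmetric positive definite, Q + Qᵀ = B = diag(-1,0,...,0,1)) and let a > 0. Consider the semi-discretization u' (t) = -a D u(t) + P⁻¹ S(u(t)) of the advection equation with SAT term S(u) = (-a(u_1 - g), 0, ..., 0)ᵀ enforcing the inflow boundary condition weakly with penalty parameter σ = -1 and boundary data g = 0. Then the discrete energy ‖u(t)‖_P² = u(t)ᵀ P u(t) is non-increasing: d/dt (uᵀ P u) = -a u_N² - a u_1² ≤ 0. -/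
/-!
Since `P` is symmetric, `d/dt (uᵀ P u) = 2 uᵀ P u'`, and `P u' = -a Q u + S(u)` no longer involves
`P⁻¹`. Summation by parts, `2 uᵀ Q u = uᵀ (Q + Qᵀ) u = u_N² - u_1²`, leaves only boundary terms:
the outflow end dissipates `-a u_N²`, and the penalty `2 uᵀ S(u) = -2a u_1²` outweighs the
inflow term `a u_1²`.
-/

open Matrix

/-- The SBP boundary matrix B = diag(-1,0,...,0,1). -/
def sbpB (n : ℕ) : Matrix (Fin (n + 2)) (Fin (n + 2)) ℝ :=
  Matrix.diagonal (fun i => if i = 0 then (-1 : ℝ) else if i = Fin.last (n + 1) then 1 else 0)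

section Derivatives

variable {𝕜 ι : Type*} [NontriviallyNormedField 𝕜] [Fintype ι] {u w : 𝕜 → ι → 𝕜} {u' w' : ι → 𝕜}
  {t : 𝕜}

theorem HasDerivAt.dotProduct (hu : HasDerivAt u u' t) (hw : HasDerivAt w w' t) :
    HasDerivAt (fun s => u s ⬝ᵥ w s) (u' ⬝ᵥ w t + u t ⬝ᵥ w') t := by
  simp only [_root_.dotProduct, ← Finset.sum_add_distrib]
  exact HasDerivAt.fun_sum fun i _ => (hasDerivAt_pi.mp hu i).mul (hasDerivAt_pi.mp hw i)

theorem HasDerivAt.mulVec {κ : Type*} (A : Matrix κ ι 𝕜) (hu : HasDerivAt u u' t) :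
    HasDerivAt (fun s => A *ᵥ u s) (A *ᵥ u') t :=
  hasDerivAt_pi.mpr fun i =>
    HasDerivAt.fun_sum fun j _ => (hasDerivAt_pi.mp hu j).const_mul (A i j)

theorem HasDerivAt.dotProduct_mulVec_self {A : Matrix ι ι 𝕜} (hA : A.IsSymm)
    (hu : HasDerivAt u u' t) :
    HasDerivAt (fun s => u s ⬝ᵥ (A *ᵥ u s)) (2 * (u t ⬝ᵥ (A *ᵥ u'))) t := by
  convert hu.dotProduct (hu.mulVec A) using 1
  rw [← dotProduct_transpose_mulVec, hA.eq]
  ring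

end Derivatives

theorem dotProduct_add_transpose_mulVec_self {ι R : Type*} [Fintype ι] [CommRing R]
    (Q : Matrix ι ι R) (x : ι → R) : x ⬝ᵥ ((Q + Qᵀ) *ᵥ x) = 2 * (x ⬝ᵥ (Q *ᵥ x)) := by
  rw [add_mulVec, dotProduct_add, dotProduct_transpose_mulVec]
  ring

theorem dotProduct_sbpB_mulVec_self (n : ℕ) (x : Fin (n + 2) → ℝ) :
    x ⬝ᵥ (sbpB n *ᵥ x) = x (Fin.last (n + 1)) ^ 2 - x 0 ^ 2 := by
  have h0 : (0 : Fin (n + 2)) ≠ Fin.last (n + 1) := Fin.last_pos.ne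
  rw [dotProduct, Fintype.sum_eq_add 0 (Fin.last (n + 1)) h0]
  · simp [sbpB, mulVec_diagonal, h0.symm]
    ring
  · rintro i ⟨hi0, hiN⟩
    simp [sbpB, mulVec_diagonal, hi0, hiN]

theorem two_mul_dotProduct_mulVec_self_of_sbp (n : ℕ) {Q : Matrix (Fin (n + 2)) (Fin (n + 2)) ℝ}
    (hQ : Q + Qᵀ = sbpB n) (x : Fin (n + 2) → ℝ) :
    2 * (x ⬝ᵥ (Q *ᵥ x)) = x (Fin.last (n + 1)) ^ 2 - x 0 ^ 2 := by
  rw [← dotProduct_add_transpose_mulVec_self, hQ, dotProduct_sbpB_mulVec_self]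

theorem mulVec_nonsing_inv_mul_mulVec {ι R : Type*} [Fintype ι] [DecidableEq ι] [CommRing R]
    {P : Matrix ι ι R} (hP : IsUnit P.det) (Q : Matrix ι ι R) (c : R) (x y : ι → R) :
    P *ᵥ (c • ((P⁻¹ * Q) *ᵥ x) + P⁻¹ *ᵥ y) = c • (Q *ᵥ x) + y := by
  rw [mulVec_add, mulVec_smul, mulVec_mulVec, mul_nonsing_inv_cancel_left _ _ hP, mulVec_mulVec,
    mul_nonsing_inv _ hP, one_mulVec]

theorem stmt1 (n : ℕ) (P Q D : Matrix (Fin (n + 2)) (Fin (n + 2)) ℝ)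
    (hP : P.PosDef) (hQ : Q + Qᵀ = sbpB n) (hD : D = P⁻¹ * Q)
    (a : ℝ) (ha : 0 < a) (u : ℝ → Fin (n + 2) → ℝ)
    (hu : ∀ t, HasDerivAt u
      (-a • (D *ᵥ u t) + P⁻¹ *ᵥ (fun i => if i = 0 then -a * (u t 0 - 0) else 0)) t) :
    ∀ t, HasDerivAt (fun s => u s ⬝ᵥ (P *ᵥ u s))
        (-a * (u t (Fin.last (n + 1))) ^ 2 - a * (u t 0) ^ 2) t ∧
      -a * (u t (Fin.last (n + 1))) ^ 2 - a * (u t 0) ^ 2 ≤ 0 := by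
  intro t
  have hsymm : P.IsSymm := isHermitian_iff_isSymm.mp hP.isHermitian
  have henergy := (hu t).dotProduct_mulVec_self hsymm
  rw [hD, mulVec_nonsing_inv_mul_mulVec hP.det_pos.ne'.isUnit, dotProduct_add, dotProduct_smul,
    smul_eq_mul] at henergy
  have hpenalty : u t ⬝ᵥ (fun i => if i = 0 then -a * (u t 0 - 0) else 0) = -a * u t 0 ^ 2 := by
    simp only [dotProduct, sub_zero, mul_ite, mul_zero, Finset.sum_ite_eq', Finset.mem_univ,
      ↓reduceIte]
    ring
  have hboundary := two_mul_dotProduct_mulVec_self_of_sbp n hQ (u t)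
  refine ⟨henergy.congr_deriv ?_, ?_⟩
  · rw [hpenalty]
    linear_combination -a * hboundary
  · nlinarith [sq_nonneg (u t 0), sq_nonneg (u t (Fin.last (n + 1)))]
end

section
/- Suppose there exist points y_1 < ... < y_N in [a,b] with y_1 = a, y_N = b and positive weights w_1, ..., w_N such that Σ_{j=1}^N w_j (fg)'(y_j) = ∫_a^b (fg)'(x) dx = f(b)g(b) - f(a)g(a) for all f, g in a finite-dimensional subspace V ⊆ C¹([a,b]) whose evaluation map at (y_1,...,y_N) restricted to V is injective. Define P = diag(w_1,...,w_N) and let D ∈ ℝ^{N×N} satisfy D f(y) = f'(y) for all f ∈ V (evaluation vectors at the y_j). Then Q := P D satisfies f(y)ᵀ (Q + Qᵀ) g(y) = f(y)ᵀ B g(y) for all f, g ∈ V, where B = diag(-1,0,...,0,1). -/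
/-!
Since `D` reproduces derivatives at the nodes, `f(y)ᵀ (P D + (P D)ᵀ) g(y)` is the quadrature
`∑ w_j (f g' + f' g)(y_j) = ∑ w_j (f g)'(y_j)`, which by exactness equals
`f(b) g(b) - f(a) g(a) = f(y)ᵀ B g(y)`.
-/

open Matrix

theorem dotProduct_sbpB_mulVec (n : ℕ) (u v : Fin (n + 2) → ℝ) :
    u ⬝ᵥ (sbpB n *ᵥ v) = u (Fin.last (n + 1)) * v (Fin.last (n + 1)) - u 0 * v 0 := by
  have hne : Fin.last (n + 1) ≠ 0 := Fin.last_pos.ne'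
  simp [sbpB, dotProduct, mulVec_diagonal, ite_mul, mul_ite, Finset.sum_ite, Finset.filter_eq', hne]
  ring

theorem dotProduct_add_transpose_mulVec {ι R : Type*} [Fintype ι] [CommSemiring R]
    (Q : Matrix ι ι R) (u v : ι → R) :
    u ⬝ᵥ ((Q + Qᵀ) *ᵥ v) = u ⬝ᵥ (Q *ᵥ v) + v ⬝ᵥ (Q *ᵥ u) := by
  rw [add_mulVec, dotProduct_add, mulVec_transpose, dotProduct_comm u (v ᵥ* Q),
    ← dotProduct_mulVec v Q u]

theorem dotProduct_diagonal_mul_add_transpose_mulVec {ι 𝕜 : Type*} [Fintype ι] [DecidableEq ι]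
    [NontriviallyNormedField 𝕜] (w : ι → 𝕜) (D : Matrix ι ι 𝕜) (y : ι → 𝕜) {f g : 𝕜 → 𝕜}
    (hf : ∀ j, DifferentiableAt 𝕜 f (y j)) (hg : ∀ j, DifferentiableAt 𝕜 g (y j))
    (hDf : D *ᵥ (fun j => f (y j)) = fun j => deriv f (y j))
    (hDg : D *ᵥ (fun j => g (y j)) = fun j => deriv g (y j)) :
    (fun j => f (y j)) ⬝ᵥ ((diagonal w * D + (diagonal w * D)ᵀ) *ᵥ fun j => g (y j)) =
      ∑ j, w j * deriv (fun x => f x * g x) (y j) := by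
  rw [dotProduct_add_transpose_mulVec, ← mulVec_mulVec, ← mulVec_mulVec, hDf, hDg,
    dotProduct, dotProduct, ← Finset.sum_add_distrib]
  refine Finset.sum_congr rfl fun j _ => ?_
  rw [mulVec_diagonal, mulVec_diagonal, deriv_fun_mul (hf j) (hg j)]
  ring

theorem stmt10_general (n : ℕ) (a b : ℝ) (y : Fin (n + 2) → ℝ)
    (hya : y 0 = a) (hyb : y (Fin.last (n + 1)) = b)
    (w : Fin (n + 2) → ℝ)
    (V : Submodule ℝ (ℝ → ℝ)) (hC1 : ∀ f ∈ V, ContDiff ℝ 1 f)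
    (hquad : ∀ f ∈ V, ∀ g ∈ V,
      ∑ j, w j * deriv (fun x => f x * g x) (y j) = f b * g b - f a * g a)
    (D : Matrix (Fin (n + 2)) (Fin (n + 2)) ℝ)
    (hD : ∀ f ∈ V, D *ᵥ (fun j => f (y j)) = fun j => deriv f (y j)) :
    ∀ f ∈ V, ∀ g ∈ V,
      (fun j => f (y j)) ⬝ᵥ
          (((Matrix.diagonal w * D) + (Matrix.diagonal w * D)ᵀ) *ᵥ fun j => g (y j)) =
        (fun j => f (y j)) ⬝ᵥ (sbpB n *ᵥ fun j => g (y j)) := by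
  intro f hf g hg
  have hdiff : ∀ h ∈ V, ∀ j, DifferentiableAt ℝ h (y j) := fun h hh _ =>
    (hC1 h hh).differentiable one_ne_zero _
  rw [dotProduct_diagonal_mul_add_transpose_mulVec w D y (hdiff f hf) (hdiff g hg) (hD f hf)
    (hD g hg), hquad f hf g hg, dotProduct_sbpB_mulVec, hya, hyb]

theorem stmt10 (n : ℕ) (a b : ℝ) (y : Fin (n + 2) → ℝ)
    (hy : StrictMono y) (hya : y 0 = a) (hyb : y (Fin.last (n + 1)) = b)
    (w : Fin (n + 2) → ℝ) (hw : ∀ j, 0 < w j)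
    (V : Submodule ℝ (ℝ → ℝ)) (hC1 : ∀ f ∈ V, ContDiff ℝ 1 f)
    (hinj : ∀ f ∈ V, (∀ j, f (y j) = 0) → f = 0)
    (hquad : ∀ f ∈ V, ∀ g ∈ V,
      ∑ j, w j * deriv (fun x => f x * g x) (y j) = f b * g b - f a * g a)
    (D : Matrix (Fin (n + 2)) (Fin (n + 2)) ℝ)
    (hD : ∀ f ∈ V, D *ᵥ (fun j => f (y j)) = fun j => deriv f (y j)) :
    ∀ f ∈ V, ∀ g ∈ V,
      (fun j => f (y j)) ⬝ᵥ
          (((Matrix.diagonal w * D) + (Matrix.diagonal w * D)ᵀ) *ᵥ fun j => g (y j)) =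
        (fun j => f (y j)) ⬝ᵥ (sbpB n *ᵥ fun j => g (y j)) :=
  stmt10_general n a b y hya hyb w V hC1 hquad D hD
end
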